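/- arXiv:2603.13416 — 3 statements merged into one kernel-verified Lean document; each statement's English description precedes it below -/
import Mathlib

section
/- Let H be a finite set of integers with m elements and let c be a positive integer such that every prime dividing c also divides every element of H. Then the (formal) Selberg products of H and of c·H over all primes coincide: the tprod over primes p of (1 - ν_p(c·H)/p)·(1 - 1/p)^{-m} equals the tprod over primes p of (1 - ν_p(H)/p)·(1 - 1/p)^{-m}. -/
/-- `nu p H` is the number of distinct residues of the elements of `H` modulo `p`. -/
def nu (p : ℕ) (H : Finset ℤ) : ℕ := (H.image (fun h : ℤ => (h : ZMod p))).card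

lemma nu_dilate (H : Finset ℤ) (c : ℕ) (p : ℕ) (hp : p.Prime)
    (hdiv : ∀ q : ℕ, q.Prime → q ∣ c → ∀ h ∈ H, (q : ℤ) ∣ h) :
    nu p (H.image (fun h : ℤ => (c : ℤ) * h)) = nu p H := by
  haveI : Fact p.Prime := ⟨hp⟩
  unfold nu
  rw [Finset.image_image]
  by_cases hpc : p ∣ c
  · apply congrArg Finset.card
    apply Finset.image_congr
    intro h hh
    simp only [Function.comp]
    have hh0 : ((h : ℤ) : ZMod p) = 0 := by
      rw [ZMod.intCast_zmod_eq_zero_iff_dvd]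
      exact hdiv p hp hpc h hh
    have hc0 : (((c : ℤ) * h : ℤ) : ZMod p) = 0 := by
      push_cast
      rw [hh0, mul_zero]
    rw [hc0, hh0]
  · have hc0 : ((c : ℕ) : ZMod p) ≠ 0 := by
      rw [Ne, ZMod.natCast_eq_zero_iff]
      exact hpc
    have : ((fun h : ℤ => (h : ZMod p)) ∘ fun h : ℤ => (c : ℤ) * h)
        = (fun x : ZMod p => ((c : ℕ) : ZMod p) * x) ∘ (fun h : ℤ => (h : ZMod p)) := by
      funext h; simp [Function.comp]
    rw [this, ← Finset.image_image,
      Finset.card_image_of_injective _ (mul_right_injective₀ hc0)]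

/-- If every prime dividing `c` divides every element of `H`, then the (formal) Selberg
products of `H` and of the dilated pattern `c·H` over all primes coincide:
`𝔖(c·H) = 𝔖(H)` where `𝔖(H) = ∏_p (1 - ν_p(H)/p)·(1 - 1/p)^{-|H|}`. -/
theorem selberg_dilation_invariant (H : Finset ℤ) (m : ℕ) (hm : H.card = m)
    (c : ℕ) (hc : 0 < c)
    (hdiv : ∀ q : ℕ, q.Prime → q ∣ c → ∀ h ∈ H, (q : ℤ) ∣ h) :
    (∏' p : Nat.Primes,
        (1 - (nu p (H.image (fun h : ℤ => (c : ℤ) * h)) : ℝ) / (p : ℕ)) *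
          (1 - 1 / ((p : ℕ) : ℝ)) ^ (-(m : ℤ))) =
    ∏' p : Nat.Primes,
        (1 - (nu p H : ℝ) / ((p : ℕ) : ℝ)) * (1 - 1 / ((p : ℕ) : ℝ)) ^ (-(m : ℤ)) := by
  apply tprod_congr
  intro p
  rw [nu_dilate H c p p.2 hdiv]
end

section
/- Let H be a finite set of integers with m elements that is admissible, i.e. ν_p(H) < p for every prime p. Then the function assigning to each prime p the value (1 - ν_p(H)/p)·(1 - 1/p)^{-m} (as a real number) is multipliable, and its product over all primes is strictly positive. In particular, the Selberg constant 𝔖(H) of an admissible pattern satisfies 𝔖(H) > 0. -/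
open Filter Real

lemma abs_log_one_sub_add_le {x : ℝ} (h0 : 0 ≤ x) (h1 : x ≤ 1 / 2) :
    |log (1 - x) + x| ≤ 2 * x ^ 2 := by
  have h := abs_log_sub_add_sum_range_le (x := x) (by rw [abs_of_nonneg h0]; linarith) 1
  simp only [Finset.sum_range_one, zero_add, pow_one, Nat.cast_zero, div_one,
    abs_of_nonneg h0] at h
  calc |log (1 - x) + x| = |x + log (1 - x)| := by rw [add_comm]
    _ ≤ x ^ 2 / (1 - x) := h
    _ ≤ 2 * x ^ 2 := by
      rw [div_le_iff₀ (by linarith)]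
      nlinarith [sq_nonneg x]

lemma abs_log_one_sub_mul_sub_mul_log_one_sub_le {a x : ℝ} (ha : 0 ≤ a) (hx : 0 ≤ x)
    (hx' : x ≤ 1 / 2) (hax : a * x ≤ 1 / 2) :
    |log (1 - a * x) - a * log (1 - x)| ≤ 2 * (a ^ 2 + a) * x ^ 2 := by
  have hax_bound := abs_log_one_sub_add_le (mul_nonneg ha hx) hax
  have hx_bound := mul_le_mul_of_nonneg_left (abs_log_one_sub_add_le hx hx') ha
  calc |log (1 - a * x) - a * log (1 - x)|
      = |(log (1 - a * x) + a * x) - a * (log (1 - x) + x)| := by ring_nf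
    _ ≤ |log (1 - a * x) + a * x| + a * |log (1 - x) + x| := by
      rw [← abs_of_nonneg ha, ← abs_mul, abs_of_nonneg ha]
      exact abs_sub _ _
    _ ≤ 2 * (a ^ 2 + a) * x ^ 2 := by nlinarith

lemma selberg_factor_pos {ν p : ℝ} (m : ℤ) (hp : 1 < p) (hν : ν < p) :
    0 < (1 - ν / p) * (1 - 1 / p) ^ m := by
  have hp0 : 0 < p := by linarith
  refine mul_pos ?_ (zpow_pos ?_ m) <;> rw [sub_pos, div_lt_one hp0] <;> assumption

lemma abs_log_selberg_factor_le {m : ℕ} {p : ℝ} (hp : 2 * m + 2 ≤ p) :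
    |log ((1 - m / p) * (1 - 1 / p) ^ (-(m : ℤ)))| ≤ 2 * (m ^ 2 + m) / p ^ 2 := by
  have hp0 : 0 < p := by linarith
  have hm_div : (m : ℝ) / p = m * (1 / p) := by ring
  have hpos := selberg_factor_pos (-(m : ℤ)) (by linarith) (by linarith : (m : ℝ) < p)
  rw [log_mul (left_ne_zero_of_mul hpos.ne') (right_ne_zero_of_mul hpos.ne'), log_zpow,
    hm_div, Int.cast_neg, Int.cast_natCast, neg_mul, ← sub_eq_add_neg]
  calc _ ≤ 2 * ((m : ℝ) ^ 2 + m) * (1 / p) ^ 2 := by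
        apply abs_log_one_sub_mul_sub_mul_log_one_sub_le (Nat.cast_nonneg m) (by positivity)
        · rw [div_le_div_iff₀ hp0 two_pos]; linarith
        · rw [← hm_div, div_le_div_iff₀ hp0 two_pos]; linarith
    _ = 2 * (m ^ 2 + m) / p ^ 2 := by ring

lemma nu_eq_card_of_forall_natAbs_sub_lt {p : ℕ} {H : Finset ℤ}
    (h : ∀ a ∈ H, ∀ b ∈ H, (a - b).natAbs < p) : nu p H = H.card := by
  refine Finset.card_image_of_injOn fun a ha b hb hab => ?_
  have hdvd : (p : ℤ) ∣ a - b := by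
    rwa [← ZMod.intCast_zmod_eq_zero_iff_dvd, Int.cast_sub, sub_eq_zero]
  have hlt : |a - b| < p := by rw [Int.abs_eq_natAbs]; exact_mod_cast h a ha b hb
  exact sub_eq_zero.mp (Int.eq_zero_of_abs_lt_dvd hdvd hlt)

lemma eventually_nu_eq_card (H : Finset ℤ) : ∀ᶠ p in atTop, nu p H = H.card := by
  have h : ∀ᶠ p in atTop, ∀ a ∈ H, ∀ b ∈ H, (a - b).natAbs < p :=
    (eventually_all_finset H).2 fun a _ =>
      (eventually_all_finset H).2 fun b _ => eventually_gt_atTop _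
  exact h.mono fun p => nu_eq_card_of_forall_natAbs_sub_lt

lemma summable_log_selberg_factor {ν : ℕ → ℕ} {m : ℕ} (hν : ∀ᶠ p in atTop, ν p = m) :
    Summable fun p : Nat.Primes =>
      log ((1 - (ν p : ℝ) / (p : ℕ)) * (1 - 1 / ((p : ℕ) : ℝ)) ^ (-(m : ℤ))) := by
  have htendsto : Tendsto (fun p : Nat.Primes => (p : ℕ)) cofinite atTop :=
    Nat.Primes.coe_nat_injective.tendsto_cofinite.trans_eq Nat.cofinite_eq_atTop
  have hbound : Summable fun p : Nat.Primes => 2 * ((m : ℝ) ^ 2 + m) / ((p : ℕ) : ℝ) ^ 2 := by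
    have h := (Nat.Primes.summable_rpow.mpr (by norm_num : (-2 : ℝ) < -1)).mul_left
      (2 * ((m : ℝ) ^ 2 + m))
    refine h.congr fun p => ?_
    rw [rpow_neg (Nat.cast_nonneg _), div_eq_mul_inv]
    norm_cast
  refine hbound.of_norm_bounded_eventually ?_
  filter_upwards [htendsto.eventually hν, htendsto.eventually (eventually_ge_atTop (2 * m + 2))]
    with p hνp hp
  rw [hνp, Real.norm_eq_abs]
  exact abs_log_selberg_factor_le (by exact_mod_cast hp)

/-- For an admissible pattern `H` (i.e. `ν_p(H) < p` for every prime `p`) with `m`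
elements, the Selberg product `∏_p (1 - ν_p(H)/p)·(1 - 1/p)^{-m}` is multipliable
and strictly positive: `𝔖(H) > 0`. -/
theorem selberg_constant_pos (H : Finset ℤ) (m : ℕ) (hm : H.card = m)
    (hadm : ∀ p : ℕ, p.Prime → nu p H < p) :
    Multipliable (fun p : Nat.Primes =>
        (1 - (nu p H : ℝ) / ((p : ℕ) : ℝ)) * (1 - 1 / ((p : ℕ) : ℝ)) ^ (-(m : ℤ))) ∧
    0 < ∏' p : Nat.Primes,
        (1 - (nu p H : ℝ) / ((p : ℕ) : ℝ)) * (1 - 1 / ((p : ℕ) : ℝ)) ^ (-(m : ℤ)) := by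
  have hpos : ∀ p : Nat.Primes,
      0 < (1 - (nu p H : ℝ) / ((p : ℕ) : ℝ)) * (1 - 1 / ((p : ℕ) : ℝ)) ^ (-(m : ℤ)) :=
    fun p => selberg_factor_pos _ (by exact_mod_cast p.2.one_lt) (by exact_mod_cast hadm p p.2)
  have hsum := summable_log_selberg_factor (hm ▸ eventually_nu_eq_card H)
  exact ⟨multipliable_of_summable_log hpos hsum, rexp_tsum_eq_tprod hpos hsum ▸ exp_pos _⟩
end

section
/- For each k ≥ 1 let N_k = p_1·p_2·...·p_k be the product of the first k primes and let H_k = {0, N_k, 2N_k, ..., (k-1)N_k}. Then the Selberg constants 𝔖(H_k) = ∏_p (1 - ν_p(H_k)/p)·(1 - 1/p)^{-k} (product over all primes p) tend to infinity as k → ∞. -/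
/-- The product of the first `k` primes (the `k`-th primorial). -/
noncomputable def primorialK (k : ℕ) : ℕ := ∏ i ∈ Finset.range k, Nat.nth Nat.Prime i

/-- The pattern `H_k = {0, N_k, 2·N_k, …, (k-1)·N_k}` where `N_k` is the `k`-th primorial. -/
noncomputable def patternHk (k : ℕ) : Finset ℤ := (Finset.range k).image (fun j : ℕ => (j : ℤ) * (primorialK k : ℤ))

/-! For the first `k` primes `p` we have `ν_p(H_k) = 1`, so the factor at `p` is
`(1 - 1/p)^(1-k) ≥ 1`, and `p = 2, 3` alone contribute `3^(k-1)`. Every other prime satisfies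
`p ≥ p_k ≥ 2k + 1` and `ν_p(H_k) = k`; there Bernoulli's inequality makes the factor at most `1`,
while its logarithm is at least `-2k²/p²`, and these sum to at least `-k`. Hence
`𝔖(H_k) ≥ 3^(k-1) e^(-k)`, which tends to infinity because `3 > e`. -/

open Filter Finset Real

theorem two_mul_add_one_le_nth_prime : ∀ k : ℕ, 2 * k + 1 ≤ Nat.nth Nat.Prime k
  | 0 => by simp [Nat.nth_prime_zero_eq_two]
  | k + 1 => by
    have ih := two_mul_add_one_le_nth_prime k
    have hlt : Nat.nth Nat.Prime k < Nat.nth Nat.Prime (k + 1) :=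
      Nat.nth_strictMono Nat.infinite_setOfPred_prime (lt_add_one k)
    have h2 := (Nat.prime_nth_prime k).two_le
    obtain ⟨m, hm⟩ := (Nat.prime_nth_prime (k + 1)).odd_of_ne_two (by omega)
    omega

theorem dvd_primorialK_iff {p k : ℕ} (hp : p.Prime) :
    p ∣ primorialK k ↔ p < Nat.nth Nat.Prime k := by
  rw [primorialK, hp.prime.dvd_finsetProd_iff]
  constructor
  · rintro ⟨i, hi, hdvd⟩
    rw [(Nat.prime_dvd_prime_iff_eq hp (Nat.prime_nth_prime i)).1 hdvd]
    exact Nat.nth_strictMono Nat.infinite_setOfPred_prime (mem_range.1 hi)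
  · intro h
    refine ⟨Nat.count Nat.Prime p, mem_range.2 ?_, by rw [Nat.nth_count hp]⟩
    exact (Nat.nth_lt_nth Nat.infinite_setOfPred_prime).1 (by rwa [Nat.nth_count hp])

theorem nu_image_mul_of_dvd {p k : ℕ} {N : ℤ} (hk : k ≠ 0) (hN : (p : ℤ) ∣ N) :
    nu p ((range k).image fun j : ℕ => (j : ℤ) * N) = 1 := by
  have hN0 : (N : ZMod p) = 0 := (ZMod.intCast_zmod_eq_zero_iff_dvd N p).2 hN
  simp [nu, image_image, Function.comp_def, hN0, image_const (nonempty_range_iff.2 hk)]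

theorem nu_image_mul_of_not_dvd {p k : ℕ} [Fact p.Prime] {N : ℤ} (hkp : k ≤ p)
    (hN : ¬ (p : ℤ) ∣ N) : nu p ((range k).image fun j : ℕ => (j : ℤ) * N) = k := by
  have hN0 : (N : ZMod p) ≠ 0 := mt (ZMod.intCast_zmod_eq_zero_iff_dvd N p).1 hN
  rw [nu, image_image, card_image_of_injOn, card_range]
  intro a ha b hb hab
  have hab' : (a : ZMod p) = b := by simpa [hN0] using hab
  simp only [coe_range, Set.mem_Iio] at ha hb
  rwa [ZMod.natCast_eq_natCast_iff', Nat.mod_eq_of_lt (by omega), Nat.mod_eq_of_lt (by omega)]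
    at hab'

theorem nu_patternHk_of_lt_nth_prime {p k : ℕ} (hp : p.Prime) (h : p < Nat.nth Nat.Prime k) :
    nu p (patternHk k) = 1 := by
  have hk : k ≠ 0 := by
    rintro rfl
    exact absurd hp.two_le (by rwa [Nat.nth_prime_zero_eq_two, ← not_le] at h)
  exact nu_image_mul_of_dvd hk (Int.natCast_dvd_natCast.2 ((dvd_primorialK_iff hp).2 h))

theorem nu_patternHk_of_nth_prime_le {p k : ℕ} (hp : p.Prime) (h : Nat.nth Nat.Prime k ≤ p) :
    nu p (patternHk k) = k :=
  haveI := Fact.mk hp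
  nu_image_mul_of_not_dvd (by linarith [two_mul_add_one_le_nth_prime k])
    (by rw [Int.natCast_dvd_natCast, dvd_primorialK_iff hp]; omega)

theorem one_sub_div_mul_one_sub_inv_zpow_le_one {x : ℝ} (hx : 1 < x) (k : ℕ) :
    (1 - k / x) * (1 - 1 / x) ^ (-(k : ℤ)) ≤ 1 := by
  have hinv : 1 / x < 1 := (div_lt_one (by linarith)).2 hx
  have bernoulli : 1 - k / x ≤ (1 - 1 / x) ^ k :=
    calc 1 - k / x = 1 + k * -(1 / x) := by ring
      _ ≤ (1 + -(1 / x)) ^ k := one_add_mul_le_pow (by linarith) k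
      _ = (1 - 1 / x) ^ k := by rw [← sub_eq_add_neg]
  rw [zpow_neg, zpow_natCast, ← div_eq_mul_inv, div_le_one (pow_pos (by linarith) k)]
  exact bernoulli

theorem neg_log_one_sub_div_mul_zpow_le {x : ℝ} {k : ℕ} (hx : 1 < x) (hkx : 2 * k ≤ x) :
    -log ((1 - k / x) * (1 - 1 / x) ^ (-(k : ℤ))) ≤ 2 * k ^ 2 / x ^ 2 := by
  have hk : (0 : ℝ) ≤ k := k.cast_nonneg
  have hx0 : 0 < x := by linarith
  have hxk : 0 < x - k := by linarith
  have hz : 0 < 1 - k / x := by rw [sub_pos, div_lt_one hx0]; linarith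
  have hy : 0 < 1 - 1 / x := by rw [sub_pos, div_lt_one hx0]; exact hx
  have hlogz : -(k / (x - k)) ≤ log (1 - k / x) :=
    calc -(k / (x - k)) = 1 - (1 - k / x)⁻¹ := by field_simp; ring
      _ ≤ log (1 - k / x) := one_sub_inv_le_log_of_pos hz
  have hlogy : k * log (1 - 1 / x) ≤ -(k / x) := by
    have := mul_le_mul_of_nonneg_left (a := (k : ℝ)) (log_le_sub_one_of_pos hy) hk
    rwa [sub_sub_cancel_left, mul_neg, mul_one_div] at this
  rw [log_mul hz.ne' (zpow_pos hy _).ne', log_zpow]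
  push_cast
  calc -(log (1 - k / x) + -k * log (1 - 1 / x)) ≤ k / (x - k) - k / x := by linarith
    _ = k ^ 2 / (x * (x - k)) := by field_simp; ring
    _ ≤ 2 * k ^ 2 / x ^ 2 := by
        rw [div_le_div_iff₀ (by positivity) (by positivity)]
        nlinarith [mul_nonneg (mul_nonneg (sq_nonneg (k : ℝ)) hx0.le) (sub_nonneg.2 hkx)]

theorem sum_inv_sq_le_inv_of_forall_lt {n : ℕ} (hn : n ≠ 0) {s : Finset ℕ}
    (hs : ∀ m ∈ s, n < m) : ∑ m ∈ s, ((m : ℝ) ^ 2)⁻¹ ≤ (n : ℝ)⁻¹ := by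
  set N := max n (s.sup id)
  calc ∑ m ∈ s, ((m : ℝ) ^ 2)⁻¹ ≤ ∑ m ∈ Ioc n N, ((m : ℝ) ^ 2)⁻¹ :=
        sum_le_sum_of_subset_of_nonneg
          (fun m hm => mem_Ioc.2 ⟨hs m hm, le_max_of_le_right (le_sup (f := id) hm)⟩)
          (fun _ _ _ => by positivity)
    _ ≤ (n : ℝ)⁻¹ - (N : ℝ)⁻¹ := sum_Ioc_inv_sq_le_sub hn (le_max_left _ _)
    _ ≤ (n : ℝ)⁻¹ := sub_le_self _ (by positivity)

noncomputable def selbergFactor (k p : ℕ) : ℝ :=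
  (1 - (nu p (patternHk k) : ℝ) / p) * (1 - 1 / (p : ℝ)) ^ (-(k : ℤ))

noncomputable def firstPrimes (k : ℕ) : Finset Nat.Primes :=
  (range (Nat.nth Nat.Prime k)).subtype Nat.Prime

theorem mem_firstPrimes {k : ℕ} {p : Nat.Primes} :
    p ∈ firstPrimes k ↔ (p : ℕ) < Nat.nth Nat.Prime k :=
  mem_subtype.trans mem_range

theorem one_sub_inv_prime_pos {p : ℕ} (hp : p.Prime) : 0 < 1 - 1 / (p : ℝ) := by
  have : (2 : ℝ) ≤ p := by exact_mod_cast hp.two_le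
  rw [sub_pos, div_lt_one (by linarith)]
  linarith

theorem log_selbergFactor_of_lt_nth_prime {k p : ℕ} (hp : p.Prime)
    (h : p < Nat.nth Nat.Prime k) : log (selbergFactor k p) = (k - 1) * -log (1 - 1 / p) := by
  have hy := (one_sub_inv_prime_pos hp).ne'
  rw [selbergFactor, nu_patternHk_of_lt_nth_prime hp h, Nat.cast_one,
    log_mul hy (zpow_ne_zero _ hy), log_zpow]
  push_cast
  ring

theorem selbergFactor_of_nth_prime_le {k p : ℕ} (hp : p.Prime) (h : Nat.nth Nat.Prime k ≤ p) :
    selbergFactor k p = (1 - k / p) * (1 - 1 / (p : ℝ)) ^ (-(k : ℤ)) := by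
  rw [selbergFactor, nu_patternHk_of_nth_prime_le hp h]

theorem two_mul_le_of_nth_prime_le {k p : ℕ} (h : Nat.nth Nat.Prime k ≤ p) :
    2 * (k : ℝ) ≤ p := by
  have := two_mul_add_one_le_nth_prime k
  exact_mod_cast (by omega : 2 * k ≤ p)

theorem selbergFactor_pos (k : ℕ) {p : ℕ} (hp : p.Prime) : 0 < selbergFactor k p := by
  have hy := one_sub_inv_prime_pos hp
  rcases lt_or_ge p (Nat.nth Nat.Prime k) with h | h
  · rw [selbergFactor, nu_patternHk_of_lt_nth_prime hp h, Nat.cast_one]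
    positivity
  · have hp0 : (0 : ℝ) < p := by exact_mod_cast hp.pos
    have hkp : (k : ℝ) < p := by linarith [two_mul_le_of_nth_prime_le h]
    rw [selbergFactor_of_nth_prime_le hp h]
    exact mul_pos (by rwa [sub_pos, div_lt_one hp0]) (zpow_pos hy _)

theorem log_selbergFactor_nonpos {k p : ℕ} (hp : p.Prime) (h : Nat.nth Nat.Prime k ≤ p) :
    log (selbergFactor k p) ≤ 0 := by
  refine log_nonpos (selbergFactor_pos k hp).le ?_
  rw [selbergFactor_of_nth_prime_le hp h]
  exact one_sub_div_mul_one_sub_inv_zpow_le_one (by exact_mod_cast hp.one_lt) k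

theorem neg_log_selbergFactor_le {k p : ℕ} (hp : p.Prime) (h : Nat.nth Nat.Prime k ≤ p) :
    -log (selbergFactor k p) ≤ 2 * k ^ 2 * ((p : ℝ) ^ 2)⁻¹ := by
  rw [selbergFactor_of_nth_prime_le hp h, ← div_eq_mul_inv]
  exact neg_log_one_sub_div_mul_zpow_le (by exact_mod_cast hp.one_lt)
    (two_mul_le_of_nth_prime_le h)

theorem sum_neg_log_selbergFactor_le {k : ℕ} (hk : k ≠ 0) {u : Finset Nat.Primes}
    (hu : ∀ p ∈ u, p ∉ firstPrimes k) : ∑ p ∈ u, -log (selbergFactor k p) ≤ k := by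
  have htail (p) (hp : p ∈ u) : Nat.nth Nat.Prime k ≤ (p : ℕ) :=
    not_lt.1 (mt mem_firstPrimes.2 (hu p hp))
  calc ∑ p ∈ u, -log (selbergFactor k p) ≤ ∑ p ∈ u, 2 * k ^ 2 * (((p : ℕ) : ℝ) ^ 2)⁻¹ :=
        sum_le_sum fun p hp => neg_log_selbergFactor_le p.2 (htail p hp)
    _ = 2 * k ^ 2 * ∑ m ∈ u.image ((↑) : Nat.Primes → ℕ), ((m : ℝ) ^ 2)⁻¹ := by
        rw [mul_sum]
        exact (sum_image (f := fun m : ℕ => 2 * (k : ℝ) ^ 2 * ((m : ℝ) ^ 2)⁻¹)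
          Nat.Primes.coe_nat_injective.injOn).symm
    _ ≤ 2 * k ^ 2 * ((2 * k : ℕ) : ℝ)⁻¹ := by
        gcongr
        refine sum_inv_sq_le_inv_of_forall_lt (by omega) fun m hm => ?_
        obtain ⟨p, hp, rfl⟩ := mem_image.1 hm
        linarith [two_mul_add_one_le_nth_prime k, htail p hp]
    _ = k := by
        push_cast
        field_simp

theorem log_three_mul_le_sum_log_selbergFactor {k : ℕ} (hk : 2 ≤ k) :
    (k - 1) * log 3 ≤ ∑ p ∈ firstPrimes k, log (selbergFactor k p) := by
  set S := (firstPrimes k).image ((↑) : Nat.Primes → ℕ)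
  have hS {n : ℕ} (hn : n ∈ S) : n.Prime ∧ n < Nat.nth Nat.Prime k := by
    obtain ⟨p, hp, rfl⟩ := mem_image.1 hn
    exact ⟨p.2, mem_firstPrimes.1 hp⟩
  have h3 : 3 < Nat.nth Nat.Prime k :=
    Nat.nth_prime_one_eq_three ▸ Nat.nth_strictMono Nat.infinite_setOfPred_prime (by omega)
  have h23 : {2, 3} ⊆ S := by
    intro n hn
    rcases mem_insert.1 hn with rfl | hn
    · exact mem_image.2 ⟨⟨2, Nat.prime_two⟩, mem_firstPrimes.2 (by simp only; omega), rfl⟩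
    · rw [mem_singleton.1 hn]
      exact mem_image.2 ⟨⟨3, Nat.prime_three⟩, mem_firstPrimes.2 h3, rfl⟩
  have hk1 : (0 : ℝ) ≤ k - 1 := by
    have : (2 : ℝ) ≤ k := by exact_mod_cast hk
    linarith
  calc (k - 1) * log 3 = (k - 1) * ∑ n ∈ ({2, 3} : Finset ℕ), -log (1 - 1 / (n : ℝ)) := by
        rw [sum_pair (by norm_num), ← neg_add, ← log_mul (by norm_num) (by norm_num)]
        norm_num [← log_inv]
    _ ≤ (k - 1) * ∑ n ∈ S, -log (1 - 1 / (n : ℝ)) := by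
        gcongr
        intro n hn _
        exact neg_nonneg.2 (log_nonpos (one_sub_inv_prime_pos (hS hn).1).le (by simp))
    _ = ∑ n ∈ S, log (selbergFactor k n) := by
        rw [mul_sum]
        exact sum_congr rfl fun n hn =>
          (log_selbergFactor_of_lt_nth_prime (hS hn).1 (hS hn).2).symm
    _ = ∑ p ∈ firstPrimes k, log (selbergFactor k p) :=
        sum_image Nat.Primes.coe_nat_injective.injOn

theorem exp_le_tprod_selbergFactor {k : ℕ} (hk : 2 ≤ k) :
    exp ((k - 1) * log 3 - k) ≤ ∏' p : Nat.Primes, selbergFactor k p := by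
  set T := ((firstPrimes k : Set Nat.Primes)ᶜ)
  have hnonneg : 0 ≤ fun p : T => -log (selbergFactor k (p : Nat.Primes)) :=
    fun p => neg_nonneg.2 (log_selbergFactor_nonpos p.1.2 (not_lt.1 (mt mem_firstPrimes.2 p.2)))
  have hbound (u : Finset T) : ∑ p ∈ u, -log (selbergFactor k (p : Nat.Primes)) ≤ k := by
    have := sum_neg_log_selbergFactor_le (k := k) (by omega)
      (u := u.map (Function.Embedding.subtype _)) (by simp +contextual [T])
    rwa [sum_map] at this
  have hsum : Summable fun p : Nat.Primes => log (selbergFactor k p) :=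
    (Finset.summable_compl_iff (firstPrimes k)).1 (summable_of_sum_le hnonneg hbound).of_neg
  have htail : -(k : ℝ) ≤ ∑' p : T, log (selbergFactor k (p : Nat.Primes)) := by
    have := Real.tsum_le_of_sum_le hnonneg hbound
    rw [tsum_neg] at this
    linarith
  rw [← rexp_tsum_eq_tprod (fun p => selbergFactor_pos k p.2) hsum,
    ← hsum.sum_add_tsum_compl (s := firstPrimes k)]
  exact exp_le_exp.2 (by linarith [log_three_mul_le_sum_log_selbergFactor hk])

/-- The Selberg constants `𝔖(H_k) = ∏_p (1 - ν_p(H_k)/p)·(1 - 1/p)^{-k}` of the primorial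
patterns `H_k` tend to infinity as `k → ∞`. -/
theorem selberg_primorial_tendsto_atTop :
    Filter.Tendsto
      (fun k : ℕ => ∏' p : Nat.Primes,
        (1 - (nu p (patternHk k) : ℝ) / ((p : ℕ) : ℝ)) * (1 - 1 / ((p : ℕ) : ℝ)) ^ (-(k : ℤ)))
      Filter.atTop Filter.atTop := by
  have hlog3 : 1 < log 3 :=
    (lt_log_iff_exp_lt (by norm_num)).2 (exp_one_lt_d9.trans (by norm_num))
  change Tendsto (fun k : ℕ => ∏' p : Nat.Primes, selbergFactor k p) atTop atTop
  refine tendsto_atTop_mono' _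
    ((eventually_ge_atTop 2).mono fun k => exp_le_tprod_selbergFactor) ?_
  have hlin : Tendsto (fun k : ℕ => (log 3 - 1) * k + -log 3) atTop atTop :=
    tendsto_atTop_add_const_right _ _
      (tendsto_natCast_atTop_atTop.const_mul_atTop (sub_pos.2 hlog3))
  exact tendsto_exp_atTop.comp (hlin.congr fun k => by ring)
end
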